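/- Let p ≥ 1 be an odd integer and let (ρ₁, ρ₋₁, c) be an admissible representation of f : ℝ → ℝ. Then ∫_ℝ ( |ρ₁(b)| + |ρ₋₁(b)| )/ψ(b) db = (1/2)·∫_ℝ ( | f^{(p+1)}(b)/p! + μ₋(b)/ψ(b) | + | f^{(p+1)}(b)/p! − μ₋(b)/ψ(b) | ) db. -/

import Mathlib

open MeasureTheory Filter
open Set

/-- The RePU activation `[t]₊^p = max(t,0)^p`. -/
noncomputable def repu (p : ℕ) (t : ℝ) : ℝ := (max t 0) ^ p

/-- The weight `ψ(b) = 1 + |b|^{p-1}`. -/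
noncomputable def ψ (p : ℕ) (b : ℝ) : ℝ := 1 + |b| ^ (p - 1)

/-- An admissible representation of `f : ℝ → ℝ`: a pair of continuous densities
`ρ₁, ρ₋₁` decaying like `1/(1+|b|^{p+2})` and a constant `c` with
`f(x) = ∫ (ρ₁(b)([x−b]₊^p − [−b]₊^p) + ρ₋₁(b)([b−x]₊^p − [b]₊^p))/ψ(b) db + c`. -/
def IsAdmissibleRep (p : ℕ) (f ρ₁ ρ₂ : ℝ → ℝ) (c : ℝ) : Prop :=
  Continuous ρ₁ ∧ Continuous ρ₂ ∧
  (∃ C > 0, ∀ b : ℝ, |ρ₁ b| ≤ C / (1 + |b| ^ (p + 2)) ∧ |ρ₂ b| ≤ C / (1 + |b| ^ (p + 2))) ∧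
  ∀ x : ℝ, f x = (∫ b : ℝ,
      (ρ₁ b * (repu p (x - b) - repu p (-b)) + ρ₂ b * (repu p (b - x) - repu p b)) / ψ p b) + c





lemma repu_of_nonpos {m : ℕ} (hm : 1 ≤ m) {t : ℝ} (ht : t ≤ 0) : repu m t = 0 := by
  rw [repu, max_eq_right ht, zero_pow (by omega)]

lemma repu_of_nonneg {m : ℕ} {t : ℝ} (ht : 0 ≤ t) : repu m t = t ^ m := by
  rw [repu, max_eq_left ht]

lemma hasDerivAt_repu {m : ℕ} (hm : 2 ≤ m) (t : ℝ) :
    HasDerivAt (repu m) (m * repu (m - 1) t) t := by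
  rcases lt_trichotomy t 0 with ht | ht | ht
  · have h0 : HasDerivAt (fun _ : ℝ => (0:ℝ)) 0 t := hasDerivAt_const t 0
    have he : (fun _ : ℝ => (0:ℝ)) =ᶠ[nhds t] repu m := by
      filter_upwards [Iio_mem_nhds ht] with x hx
      exact (repu_of_nonpos (by omega) (le_of_lt hx)).symm
    have := h0.congr_of_eventuallyEq he.symm
    rwa [repu_of_nonpos (by omega) ht.le, mul_zero]
  · subst ht
    rw [repu_of_nonpos (by omega) le_rfl, mul_zero]
    rw [hasDerivAt_iff_tendsto_slope]
    have hb : ∀ h : ℝ, h ≠ 0 → ‖slope (repu m) 0 h‖ ≤ |h| ^ (m - 1) := by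
      intro h hh
      rw [slope_def_field, div_eq_inv_mul, repu_of_nonpos (by omega) le_rfl, sub_zero,
        sub_zero, Real.norm_eq_abs, abs_mul, abs_inv]
      have : |repu m h| ≤ |h| ^ m := by
        rw [abs_of_nonneg (pow_nonneg (le_max_right _ _) _)]
        exact pow_le_pow_left₀ (le_max_right _ _) (max_le (le_abs_self h) (abs_nonneg h)) m
      have hh' : 0 < |h| := abs_pos.mpr hh
      calc |h|⁻¹ * |repu m h| ≤ |h|⁻¹ * |h| ^ m := by
            exact mul_le_mul_of_nonneg_left this (by positivity)
        _ = |h| ^ (m - 1) := by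
            rw [show m = (m - 1) + 1 by omega, pow_succ]
            field_simp
            rw [Nat.add_sub_cancel]
    apply squeeze_zero_norm' _ _
    · exact fun h : ℝ => |h| ^ (m - 1)
    · filter_upwards [self_mem_nhdsWithin] with h hh
      exact hb h hh
    · have : Tendsto (fun h : ℝ => |h| ^ (m - 1)) (nhds 0) (nhds (|(0:ℝ)| ^ (m - 1))) :=
        ((continuous_abs.pow (m - 1)).tendsto 0)
      simp only [abs_zero, zero_pow (by omega : m - 1 ≠ 0)] at this
      exact this.mono_left nhdsWithin_le_nhds
  · have h0 : HasDerivAt (fun x : ℝ => x ^ m) (m * t ^ (m - 1)) t := by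
      simpa using hasDerivAt_pow m t
    have he : (fun x : ℝ => x ^ m) =ᶠ[nhds t] repu m := by
      filter_upwards [Ioi_mem_nhds ht] with x hx
      exact (repu_of_nonneg (le_of_lt hx)).symm
    have := h0.congr_of_eventuallyEq he.symm
    rwa [repu_of_nonneg ht.le]



lemma repu_nonneg (m : ℕ) (t : ℝ) : 0 ≤ repu m t := pow_nonneg (le_max_right _ _) _

lemma repu_abs_le (m : ℕ) (t : ℝ) : |repu m t| ≤ |t| ^ m := by
  rw [abs_of_nonneg (repu_nonneg m t)]
  exact pow_le_pow_left₀ (le_max_right _ _) (max_le (le_abs_self t) (abs_nonneg t)) m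

lemma continuous_repu (m : ℕ) : Continuous (repu m) :=
  (continuous_id.max continuous_const).pow m

lemma psi_ge_one (p : ℕ) (b : ℝ) : 1 ≤ ψ p b := by
  have : (0:ℝ) ≤ |b| ^ (p-1) := pow_nonneg (abs_nonneg b) _
  simp [ψ]

lemma psi_pos (p : ℕ) (b : ℝ) : 0 < ψ p b := lt_of_lt_of_le one_pos (psi_ge_one p b)

lemma continuous_psi (p : ℕ) : Continuous (ψ p) :=
  continuous_const.add ((continuous_abs).pow _)

lemma one_add_pow_le (n : ℕ) (x : ℝ) (hx : 0 ≤ x) : (1 + x) ^ n ≤ 2 ^ n * (1 + x ^ n) := by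
  have h1 : (1 + x) ≤ 2 * max 1 x := by
    rcases le_total x 1 with h | h
    · rw [max_eq_left h]; linarith
    · rw [max_eq_right h]; linarith
  calc (1+x)^n ≤ (2 * max 1 x)^n := pow_le_pow_left₀ (by linarith) h1 n
    _ = 2^n * (max 1 x)^n := mul_pow _ _ _
    _ ≤ 2^n * (1 + x^n) := by
        apply mul_le_mul_of_nonneg_left _ (by positivity)
        rcases le_total x 1 with h | h
        · rw [max_eq_left h]; simp; positivity
        · rw [max_eq_right h]; nlinarith [pow_nonneg hx n]

/-- Master integrability lemma. -/
lemma integrable_of_decay (p m : ℕ) (hm : m ≤ p) (h : ℝ → ℝ)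
    (hmeas : AEStronglyMeasurable h volume) (D A : ℝ) (hA : 0 ≤ A)
    (hb : ∀ b : ℝ, |h b| ≤ D * (A + |b|) ^ m / (1 + |b| ^ (p + 2))) :
    Integrable h := by
  have key : ∀ b : ℝ, D * (A + |b|) ^ m / (1 + |b| ^ (p + 2)) ≤
      |D| * (A + 1) ^ m * 2 ^ (p + 2) * (1 + b ^ 2)⁻¹ := by
    intro b
    have hb0 : (0:ℝ) ≤ |b| := abs_nonneg b
    have hden : (0:ℝ) < 1 + |b| ^ (p + 2) := by positivity
    have h1 : (A + |b|) ^ m ≤ (A + 1) ^ m * (1 + |b|) ^ m := by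
      rw [← mul_pow]
      apply pow_le_pow_left₀ (by linarith)
      nlinarith
    have h2 : (1 + |b|) ^ m ≤ (1 + |b|) ^ p := by
      apply pow_le_pow_right₀ (by linarith) hm
    have h3 : (1 + |b|) ^ p * (1 + b ^ 2) ≤ (1 + |b|) ^ (p + 2) := by
      rw [pow_add]
      apply mul_le_mul_of_nonneg_left _ (by positivity)
      have : b ^ 2 = |b| ^ 2 := (sq_abs b).symm
      nlinarith
    have h4 : (1 + |b|) ^ (p + 2) ≤ 2 ^ (p + 2) * (1 + |b| ^ (p + 2)) :=
      one_add_pow_le _ _ hb0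
    have hbsq : (0:ℝ) < 1 + b ^ 2 := by positivity
    have hbsq : (0:ℝ) < 1 + b ^ 2 := by positivity
    have p1 : (A + |b|) ^ m ≤ (A + 1) ^ m * (1 + |b|) ^ p :=
      h1.trans (mul_le_mul_of_nonneg_left h2 (by positivity))
    have p2 : D * (A + |b|) ^ m ≤ |D| * ((A + 1) ^ m * (1 + |b|) ^ p) :=
      mul_le_mul (le_abs_self D) p1 (by positivity) (abs_nonneg D)
    have p3 : (1 + |b|) ^ p * (1 + b ^ 2) ≤ 2 ^ (p + 2) * (1 + |b| ^ (p + 2)) := h3.trans h4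
    have target : D * (A + |b|) ^ m * (1 + b ^ 2) ≤
        |D| * (A + 1) ^ m * (2 ^ (p + 2) * (1 + |b| ^ (p + 2))) := by
      calc D * (A + |b|) ^ m * (1 + b ^ 2)
          ≤ |D| * ((A + 1) ^ m * (1 + |b|) ^ p) * (1 + b ^ 2) :=
            mul_le_mul_of_nonneg_right p2 hbsq.le
        _ = |D| * (A + 1) ^ m * ((1 + |b|) ^ p * (1 + b ^ 2)) := by ring
        _ ≤ |D| * (A + 1) ^ m * (2 ^ (p + 2) * (1 + |b| ^ (p + 2))) :=
            mul_le_mul_of_nonneg_left p3 (by positivity)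
    rw [div_le_iff₀ hden,
      show |D| * (A + 1) ^ m * 2 ^ (p + 2) * (1 + b ^ 2)⁻¹ * (1 + |b| ^ (p + 2)) =
        (|D| * (A + 1) ^ m * (2 ^ (p + 2) * (1 + |b| ^ (p + 2)))) / (1 + b ^ 2) by ring,
      le_div_iff₀ hbsq]
    exact target
  apply Integrable.mono' ((integrable_inv_one_add_sq).const_mul (|D| * (A + 1) ^ m * 2 ^ (p + 2))) hmeas
  refine ae_of_all _ fun b => ?_
  rw [Real.norm_eq_abs]
  exact (hb b).trans (key b)



noncomputable def G (p : ℕ) (ρ₁ ρ₂ : ℝ → ℝ) (m : ℕ) (s x : ℝ) : ℝ :=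
  ∫ b : ℝ, (ρ₁ b * repu m (x - b) + s * (ρ₂ b * repu m (b - x))) / ψ p b

noncomputable def ind (t : ℝ) : ℝ := if 0 < t then 1 else 0

section main

variable {p : ℕ} {ρ₁ ρ₂ : ℝ → ℝ} {C : ℝ}

lemma cont_integrand (h1 : Continuous ρ₁) (h2 : Continuous ρ₂) (m : ℕ) (s x : ℝ) :
    Continuous fun b => (ρ₁ b * repu m (x - b) + s * (ρ₂ b * repu m (b - x))) / ψ p b :=
  ((h1.mul ((continuous_repu m).comp (continuous_const.sub continuous_id))).add
    (continuous_const.mul (h2.mul ((continuous_repu m).comp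
      (continuous_id.sub continuous_const))))).div (continuous_psi p)
    fun b => (psi_pos p b).ne'

lemma integrand_bound
    (hC : ∀ b : ℝ, |ρ₁ b| ≤ C / (1 + |b| ^ (p + 2)) ∧ |ρ₂ b| ≤ C / (1 + |b| ^ (p + 2)))
    {s : ℝ} (hs : |s| ≤ 1) (m : ℕ) {x R : ℝ} (hx : |x| ≤ R) (b : ℝ) :
    |(ρ₁ b * repu m (x - b) + s * (ρ₂ b * repu m (b - x))) / ψ p b| ≤
      2 * C * (R + |b|) ^ m / (1 + |b| ^ (p + 2)) := by
  have hden : (0:ℝ) < 1 + |b| ^ (p + 2) := by positivity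
  have hRb : (0:ℝ) ≤ R + |b| := by
    have := abs_nonneg x; have := abs_nonneg b; linarith
  have hr1 : repu m (x - b) ≤ (R + |b|) ^ m := by
    refine le_trans (le_trans (le_abs_self _) (repu_abs_le m _)) ?_
    apply pow_le_pow_left₀ (abs_nonneg _)
    calc |x - b| ≤ |x| + |b| := abs_sub _ _
      _ ≤ R + |b| := by linarith
  have hr2 : repu m (b - x) ≤ (R + |b|) ^ m := by
    refine le_trans (le_trans (le_abs_self _) (repu_abs_le m _)) ?_
    apply pow_le_pow_left₀ (abs_nonneg _)
    calc |b - x| ≤ |b| + |x| := abs_sub _ _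
      _ ≤ R + |b| := by linarith
  have hC1 := (hC b).1; have hC2 := (hC b).2
  have hCpos : 0 ≤ C / (1 + |b| ^ (p + 2)) := le_trans (abs_nonneg _) hC1
  have key : |ρ₁ b * repu m (x - b) + s * (ρ₂ b * repu m (b - x))| ≤
      2 * C * (R + |b|) ^ m / (1 + |b| ^ (p + 2)) := by
    calc |ρ₁ b * repu m (x - b) + s * (ρ₂ b * repu m (b - x))|
        ≤ |ρ₁ b * repu m (x - b)| + |s * (ρ₂ b * repu m (b - x))| := abs_add_le _ _
      _ = |ρ₁ b| * repu m (x - b) + |s| * (|ρ₂ b| * repu m (b - x)) := by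
          rw [abs_mul, abs_mul, abs_mul, abs_of_nonneg (repu_nonneg m _),
            abs_of_nonneg (repu_nonneg m _)]
      _ ≤ |ρ₁ b| * (R + |b|) ^ m + 1 * (|ρ₂ b| * (R + |b|) ^ m) := by
          have t1 : |ρ₁ b| * repu m (x - b) ≤ |ρ₁ b| * (R + |b|) ^ m :=
            mul_le_mul_of_nonneg_left hr1 (abs_nonneg _)
          have t2 : |s| * (|ρ₂ b| * repu m (b - x)) ≤ 1 * (|ρ₂ b| * (R + |b|) ^ m) := by
            apply mul_le_mul hs (mul_le_mul_of_nonneg_left hr2 (abs_nonneg _))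
              (mul_nonneg (abs_nonneg _) (repu_nonneg m _)) zero_le_one
          linarith
      _ ≤ (C / (1 + |b| ^ (p + 2))) * (R + |b|) ^ m
            + (C / (1 + |b| ^ (p + 2))) * (R + |b|) ^ m := by
          have := pow_nonneg hRb m
          nlinarith
      _ = 2 * C * (R + |b|) ^ m / (1 + |b| ^ (p + 2)) := by ring
  calc |(ρ₁ b * repu m (x - b) + s * (ρ₂ b * repu m (b - x))) / ψ p b|
      = |ρ₁ b * repu m (x - b) + s * (ρ₂ b * repu m (b - x))| / ψ p b := by
        rw [abs_div, abs_of_pos (psi_pos p b)]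
    _ ≤ |ρ₁ b * repu m (x - b) + s * (ρ₂ b * repu m (b - x))| / 1 := by
        apply div_le_div_of_nonneg_left ?_ ?_ (psi_ge_one p b) <;> first
          | exact abs_nonneg _ | exact one_pos
    _ = |ρ₁ b * repu m (x - b) + s * (ρ₂ b * repu m (b - x))| := div_one _
    _ ≤ 2 * C * (R + |b|) ^ m / (1 + |b| ^ (p + 2)) := key

lemma G_integrable (h1 : Continuous ρ₁) (h2 : Continuous ρ₂)
    (hC : ∀ b : ℝ, |ρ₁ b| ≤ C / (1 + |b| ^ (p + 2)) ∧ |ρ₂ b| ≤ C / (1 + |b| ^ (p + 2)))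
    {m : ℕ} (hm : m ≤ p) {s : ℝ} (hs : |s| ≤ 1) (x : ℝ) :
    Integrable fun b => (ρ₁ b * repu m (x - b) + s * (ρ₂ b * repu m (b - x))) / ψ p b := by
  apply integrable_of_decay p m hm _ (cont_integrand h1 h2 m s x).aestronglyMeasurable
    (2 * C) |x| (abs_nonneg x)
  exact integrand_bound hC hs m le_rfl


lemma hasDerivAt_G (h1 : Continuous ρ₁) (h2 : Continuous ρ₂)
    (hC0 : 0 ≤ C) (hC : ∀ b : ℝ, |ρ₁ b| ≤ C / (1 + |b| ^ (p + 2)) ∧ |ρ₂ b| ≤ C / (1 + |b| ^ (p + 2)))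
    {m : ℕ} (hm2 : 2 ≤ m) (hmp : m ≤ p) {s : ℝ} (hs : |s| ≤ 1) (x₀ : ℝ) :
    HasDerivAt (G p ρ₁ ρ₂ m s) ((m : ℝ) * G p ρ₁ ρ₂ (m - 1) (-s) x₀) x₀ := by
  have hs' : |(-s)| ≤ 1 := by rwa [abs_neg]
  set F : ℝ → ℝ → ℝ := fun x b =>
    (ρ₁ b * repu m (x - b) + s * (ρ₂ b * repu m (b - x))) / ψ p b with hF
  set F' : ℝ → ℝ → ℝ := fun x b =>
    (m : ℝ) * ((ρ₁ b * repu (m-1) (x - b) + (-s) * (ρ₂ b * repu (m-1) (b - x))) / ψ p b) with hF'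
  have key := hasDerivAt_integral_of_dominated_loc_of_deriv_le (μ := volume)
    (F := F) (F' := F') (x₀ := x₀)
    (bound := fun b => (m : ℝ) * (2 * C * ((|x₀| + 1) + |b|) ^ (m-1) / (1 + |b| ^ (p + 2))))
    (Metric.ball_mem_nhds x₀ one_pos)
    (Eventually.of_forall fun x => (cont_integrand h1 h2 m s x).aestronglyMeasurable)
    (G_integrable h1 h2 hC hmp hs x₀)
    ((continuous_const.mul (cont_integrand h1 h2 (m-1) (-s) x₀)).aestronglyMeasurable)
    ?_ ?_ ?_
  · have : (∫ b, F' x₀ b) = (m : ℝ) * G p ρ₁ ρ₂ (m - 1) (-s) x₀ := by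
      rw [hF']
      exact integral_const_mul _ _
    rw [← this]
    exact key.2
  · -- bound
    refine Eventually.of_forall fun b => fun x hx => ?_
    have hxb : |x| ≤ |x₀| + 1 := by
      have : dist x x₀ < 1 := Metric.mem_ball.mp hx
      rw [Real.dist_eq] at this
      calc |x| = |x₀ + (x - x₀)| := by ring_nf
        _ ≤ |x₀| + |x - x₀| := abs_add_le _ _
        _ ≤ |x₀| + 1 := by linarith
    have hb := integrand_bound hC hs' (m-1) hxb b
    rw [Real.norm_eq_abs, hF']
    simp only [abs_mul, Nat.abs_cast]
    exact mul_le_mul_of_nonneg_left hb (Nat.cast_nonneg m)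
  · -- integrability of bound
    apply integrable_of_decay p (m-1) (by omega) _ ?_ ((m:ℝ) * (2 * C)) (|x₀| + 1)
      (by positivity)
    · intro b
      have hden : (0:ℝ) < 1 + |b| ^ (p + 2) := by positivity
      rw [abs_of_nonneg (by positivity)]
      apply le_of_eq
      ring
    · apply Continuous.aestronglyMeasurable
      exact continuous_const.mul (((continuous_const.mul ((continuous_const.add
        continuous_abs).pow _))).div (continuous_const.add (continuous_abs.pow _))
        (fun b => ne_of_gt (by positivity)))
  · -- differentiability
    refine Eventually.of_forall fun b => fun x _ => ?_
    have d1 : HasDerivAt (fun x : ℝ => repu m (x - b)) ((m : ℝ) * repu (m-1) (x - b)) x := by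
      have := (hasDerivAt_repu hm2 (x - b)).comp x ((hasDerivAt_id x).sub_const b)
      simpa [Function.comp_def] using this
    have d2 : HasDerivAt (fun x : ℝ => repu m (b - x)) (-((m : ℝ) * repu (m-1) (b - x))) x := by
      have := (hasDerivAt_repu hm2 (b - x)).comp x ((hasDerivAt_const x b).sub (hasDerivAt_id x))
      simpa [Function.comp_def] using this
    have := ((d1.const_mul (ρ₁ b)).add ((d2.const_mul (ρ₂ b)).const_mul s)).div_const (ψ p b)
    refine this.congr_deriv ?_
    rw [hF']
    ring

lemma rho_div_psi_integrable (h1 : Continuous ρ₁)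
    (hC1 : ∀ b : ℝ, |ρ₁ b| ≤ C / (1 + |b| ^ (p + 2))) :
    Integrable fun b => ρ₁ b / ψ p b := by
  apply integrable_of_decay p 0 (Nat.zero_le p) _
    ((h1.div (continuous_psi p) fun b => (psi_pos p b).ne').aestronglyMeasurable) C 0 le_rfl
  intro b
  have hb : |ρ₁ b / ψ p b| ≤ |ρ₁ b| := by
    rw [abs_div, abs_of_pos (psi_pos p b)]
    calc |ρ₁ b| / ψ p b ≤ |ρ₁ b| / 1 :=
          div_le_div_of_nonneg_left (abs_nonneg _) one_pos (psi_ge_one p b)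
      _ = |ρ₁ b| := div_one _
  calc |ρ₁ b / ψ p b| ≤ C / (1 + |b| ^ (p + 2)) := hb.trans (hC1 b)
    _ = C * (0 + |b|) ^ 0 / (1 + |b| ^ (p + 2)) := by simp

lemma hasDerivAt_G_one (h1 : Continuous ρ₁) (h2 : Continuous ρ₂) (hC0 : 0 ≤ C)
    (hC : ∀ b : ℝ, |ρ₁ b| ≤ C / (1 + |b| ^ (p + 2)) ∧ |ρ₂ b| ≤ C / (1 + |b| ^ (p + 2)))
    (hp1 : 1 ≤ p) {s : ℝ} (hs : |s| ≤ 1) (x₀ : ℝ) :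
    HasDerivAt (G p ρ₁ ρ₂ 1 s)
      ((∫ b in Iio x₀, ρ₁ b / ψ p b) - s * ∫ b in Ioi x₀, ρ₂ b / ψ p b) x₀ := by
  have hg1 : Integrable fun b => ρ₁ b / ψ p b := rho_div_psi_integrable h1 fun b => (hC b).1
  have hg2 : Integrable fun b => ρ₂ b / ψ p b := rho_div_psi_integrable h2 fun b => (hC b).2
  set F : ℝ → ℝ → ℝ := fun x b =>
    (ρ₁ b * repu 1 (x - b) + s * (ρ₂ b * repu 1 (b - x))) / ψ p b with hF
  set F' : ℝ → ℝ := fun b =>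
    Set.indicator (Iio x₀) (fun b => ρ₁ b / ψ p b) b
      - s * Set.indicator (Ioi x₀) (fun b => ρ₂ b / ψ p b) b with hF'
  have hI1 : Integrable (Set.indicator (Iio x₀) fun b => ρ₁ b / ψ p b) :=
    hg1.indicator measurableSet_Iio
  have hI2 : Integrable (Set.indicator (Ioi x₀) fun b => ρ₂ b / ψ p b) :=
    hg2.indicator measurableSet_Ioi
  have hae : ∀ᵐ b : ℝ, b ≠ x₀ := by
    rw [ae_iff]
    simpa [not_not] using measure_singleton (α := ℝ) x₀
  have key := hasDerivAt_integral_of_dominated_loc_of_lip (μ := volume)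
    (F := F) (F' := F') (x₀ := x₀) (bound := fun b => |ρ₁ b| + |ρ₂ b|) (Metric.ball_mem_nhds x₀ one_pos)
    (Eventually.of_forall fun x => (cont_integrand h1 h2 1 s x).aestronglyMeasurable)
    (G_integrable h1 h2 hC hp1 hs x₀)
    (hI1.aestronglyMeasurable.sub (hI2.aestronglyMeasurable.const_mul s))
    ?_ ?_ ?_
  · have : (∫ b, F' b) = (∫ b in Iio x₀, ρ₁ b / ψ p b) - s * ∫ b in Ioi x₀, ρ₂ b / ψ p b := by
      rw [hF']
      rw [integral_sub hI1 (hI2.const_mul s), integral_const_mul,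
        integral_indicator measurableSet_Iio, integral_indicator measurableSet_Ioi]
    rw [← this]
    exact key.2
  · -- Lipschitz
    refine Eventually.of_forall fun b => ?_
    apply LipschitzWith.lipschitzOnWith
    apply LipschitzWith.of_dist_le_mul
    intro x y
    rw [Real.dist_eq, Real.dist_eq, Real.coe_nnabs]
    have e : F x b - F y b = (ρ₁ b * (repu 1 (x - b) - repu 1 (y - b))
        + s * (ρ₂ b * (repu 1 (b - x) - repu 1 (b - y)))) / ψ p b := by
      simp only [hF]
      ring
    have hr1 : |repu 1 (x - b) - repu 1 (y - b)| ≤ |x - y| := by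
      simp only [repu, pow_one]
      have := abs_max_sub_max_le_abs (x - b) (y - b) 0
      simpa using this
    have hr2 : |repu 1 (b - x) - repu 1 (b - y)| ≤ |x - y| := by
      simp only [repu, pow_one]
      have := abs_max_sub_max_le_abs (b - x) (b - y) 0
      rw [show b - x - (b - y) = y - x by ring] at this
      rw [abs_sub_comm x y]
      simpa using this
    have hnum : |ρ₁ b * (repu 1 (x - b) - repu 1 (y - b))
        + s * (ρ₂ b * (repu 1 (b - x) - repu 1 (b - y)))| ≤ (|ρ₁ b| + |ρ₂ b|) * |x - y| := by
      calc |ρ₁ b * (repu 1 (x - b) - repu 1 (y - b))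
          + s * (ρ₂ b * (repu 1 (b - x) - repu 1 (b - y)))|
          ≤ |ρ₁ b * (repu 1 (x - b) - repu 1 (y - b))|
            + |s * (ρ₂ b * (repu 1 (b - x) - repu 1 (b - y)))| := abs_add_le _ _
        _ = |ρ₁ b| * |repu 1 (x - b) - repu 1 (y - b)|
            + |s| * (|ρ₂ b| * |repu 1 (b - x) - repu 1 (b - y)|) := by
            rw [abs_mul, abs_mul, abs_mul]
        _ ≤ |ρ₁ b| * |x - y| + 1 * (|ρ₂ b| * |x - y|) := by
            have t1 := mul_le_mul_of_nonneg_left hr1 (abs_nonneg (ρ₁ b))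
            have t2 : |s| * (|ρ₂ b| * |repu 1 (b - x) - repu 1 (b - y)|)
                ≤ 1 * (|ρ₂ b| * |x - y|) :=
              mul_le_mul hs (mul_le_mul_of_nonneg_left hr2 (abs_nonneg _))
                (mul_nonneg (abs_nonneg _) (abs_nonneg _)) zero_le_one
            linarith
        _ = (|ρ₁ b| + |ρ₂ b|) * |x - y| := by ring
    have habs : |(|ρ₁ b| + |ρ₂ b|)| = |ρ₁ b| + |ρ₂ b| := by
      rw [abs_of_nonneg]; positivity
    rw [habs, e, abs_div, abs_of_pos (psi_pos p b)]
    calc _ ≤ (|ρ₁ b * (repu 1 (x - b) - repu 1 (y - b))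
          + s * (ρ₂ b * (repu 1 (b - x) - repu 1 (b - y)))|) / 1 :=
          div_le_div_of_nonneg_left (abs_nonneg _) one_pos (psi_ge_one p b)
      _ = _ := div_one _
      _ ≤ (|ρ₁ b| + |ρ₂ b|) * |x - y| := hnum
  · -- bound integrable
    apply integrable_of_decay p 0 (Nat.zero_le p) _
      ((h1.abs.add h2.abs).aestronglyMeasurable) (2 * C) 0 le_rfl
    intro b
    have := (hC b).1
    have := (hC b).2
    rw [Pi.add_apply]
    rw [abs_of_nonneg (by positivity : (0:ℝ) ≤ |ρ₁ b| + |ρ₂ b|)]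
    calc |ρ₁ b| + |ρ₂ b| ≤ C / (1 + |b| ^ (p + 2)) + C / (1 + |b| ^ (p + 2)) := by linarith
      _ = 2 * C * (0 + |b|) ^ 0 / (1 + |b| ^ (p + 2)) := by
          rw [zero_add, pow_zero, mul_one]; ring
  · -- a.e. differentiability at x₀
    filter_upwards [hae] with b hb
    rcases lt_or_gt_of_ne hb with hblt | hbgt
    · -- b < x₀
      have hd : HasDerivAt (fun x : ℝ => (ρ₁ b * (x - b) + s * (ρ₂ b * 0)) / ψ p b)
          (ρ₁ b * 1 / ψ p b) x₀ :=
        ((((hasDerivAt_id x₀).sub_const b).const_mul (ρ₁ b)).add_const _).div_const _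
      have heq : (fun x : ℝ => (ρ₁ b * (x - b) + s * (ρ₂ b * 0)) / ψ p b) =ᶠ[nhds x₀] (F · b) := by
        filter_upwards [Ioi_mem_nhds hblt] with x hx
        have h1' : repu 1 (x - b) = x - b := by
          rw [repu_of_nonneg (by simp only [mem_Ioi] at hx; linarith), pow_one]
        have h2' : repu 1 (b - x) = 0 :=
          repu_of_nonpos le_rfl (by simp only [mem_Ioi] at hx; linarith)
        simp only [hF, h1', h2']
      have := hd.congr_of_eventuallyEq heq.symm
      convert this using 1
      show (Iio x₀).indicator (fun b => ρ₁ b / ψ p b) b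
          - s * (Ioi x₀).indicator (fun b => ρ₂ b / ψ p b) b = _
      rw [Set.indicator_of_mem (mem_Iio.mpr hblt), Set.indicator_of_notMem (by
        simp only [mem_Ioi]; push_neg; linarith)]
      ring
    · -- b > x₀
      have hd : HasDerivAt (fun x : ℝ => (ρ₁ b * 0 + s * (ρ₂ b * (b - x))) / ψ p b)
          ((s * (ρ₂ b * (0 - 1))) / ψ p b) x₀ := by
        exact ((((hasDerivAt_const x₀ b).sub (hasDerivAt_id x₀)).const_mul
          (ρ₂ b)).const_mul s).const_add _ |>.div_const _
      have heq : (fun x : ℝ => (ρ₁ b * 0 + s * (ρ₂ b * (b - x))) / ψ p b) =ᶠ[nhds x₀] (F · b) := by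
        filter_upwards [Iio_mem_nhds hbgt] with x hx
        have h1' : repu 1 (x - b) = 0 :=
          repu_of_nonpos le_rfl (by simp only [mem_Iio] at hx; linarith)
        have h2' : repu 1 (b - x) = b - x := by
          rw [repu_of_nonneg (by simp only [mem_Iio] at hx; linarith), pow_one]
        simp only [hF, h1', h2']
      have := hd.congr_of_eventuallyEq heq.symm
      convert this using 1
      show (Iio x₀).indicator (fun b => ρ₁ b / ψ p b) b
          - s * (Ioi x₀).indicator (fun b => ρ₂ b / ψ p b) b = _
      rw [Set.indicator_of_notMem (by simp only [mem_Iio]; push_neg; linarith),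
        Set.indicator_of_mem (mem_Ioi.mpr hbgt)]
      ring

end main



lemma hasDerivAt_integral_Iio (g : ℝ → ℝ) (hg : Continuous g) (hgi : Integrable g) (x₀ : ℝ) :
    HasDerivAt (fun x => ∫ b in Iio x, g b) (g x₀) x₀ := by
  have hd : HasDerivAt (fun x => ∫ t in x₀..x, g t) (g x₀) x₀ :=
    intervalIntegral.integral_hasDerivAt_right (hgi.intervalIntegrable)
      (hg.stronglyMeasurableAtFilter volume _) hg.continuousAt
  have hfun : (fun x => ∫ b in Iio x, g b)
      = fun x => (∫ b in Iic x₀, g b) + ∫ t in x₀..x, g t := by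
    funext x
    have h1 := intervalIntegral.integral_Iic_sub_Iic (hgi.integrableOn) (hgi.integrableOn)
      (a := x₀) (b := x) (μ := volume)
    rw [setIntegral_congr_set Iio_ae_eq_Iic]
    linarith
  rw [hfun]
  exact hd.const_add _

lemma hasDerivAt_integral_Ioi (g : ℝ → ℝ) (hg : Continuous g) (hgi : Integrable g) (x₀ : ℝ) :
    HasDerivAt (fun x => ∫ b in Ioi x, g b) (-(g x₀)) x₀ := by
  have hd : HasDerivAt (fun x => ∫ t in x₀..x, g t) (g x₀) x₀ :=
    intervalIntegral.integral_hasDerivAt_right (hgi.intervalIntegrable)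
      (hg.stronglyMeasurableAtFilter volume _) hg.continuousAt
  have hfun : (fun x => ∫ b in Ioi x, g b)
      = fun x => ((∫ b, g b) - ∫ b in Iic x₀, g b) - ∫ t in x₀..x, g t := by
    funext x
    have h1 := intervalIntegral.integral_Iic_sub_Iic (hgi.integrableOn) (hgi.integrableOn)
      (a := x₀) (b := x) (μ := volume)
    have h2 := intervalIntegral.integral_Iic_add_Ioi (hgi.integrableOn) (hgi.integrableOn) (b := x) (μ := volume)
    linarith
  rw [hfun]
  exact hd.const_sub _


/-- for odd `p` and an admissible representation of `f`,
`∫ (|ρ₁|+|ρ₋₁|)/ψ = (1/2)∫ ( |f^{(p+1)}/p! + μ₋/ψ| + |f^{(p+1)}/p! − μ₋/ψ| )`. -/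
theorem stmt_11 (p : ℕ) (hp : 1 ≤ p) (hodd : Odd p) (f ρ₁ ρ₂ : ℝ → ℝ) (c : ℝ)
    (hrep : IsAdmissibleRep p f ρ₁ ρ₂ c) :
    ∫ b : ℝ, (|ρ₁ b| + |ρ₂ b|) / ψ p b =
      (1 / 2) * ∫ b : ℝ,
        (|iteratedDeriv (p + 1) f b / (p.factorial : ℝ) + (ρ₁ b - ρ₂ b) / ψ p b|
          + |iteratedDeriv (p + 1) f b / (p.factorial : ℝ) - (ρ₁ b - ρ₂ b) / ψ p b|) := by
  obtain ⟨h1, h2, ⟨C, hCpos, hC⟩, hf⟩ := hrep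
  have hC0 : (0:ℝ) ≤ C := hCpos.le
  have hs1 : |(1:ℝ)| ≤ 1 := by norm_num
  -- Step A : f = G p 1 + const
  have hsplit : ∀ x : ℝ, f x = G p ρ₁ ρ₂ p 1 x + (c - G p ρ₁ ρ₂ p 1 0) := by
    intro x
    have e : (fun b : ℝ => (ρ₁ b * (repu p (x - b) - repu p (-b))
          + ρ₂ b * (repu p (b - x) - repu p b)) / ψ p b)
        = fun b => (ρ₁ b * repu p (x - b) + 1 * (ρ₂ b * repu p (b - x))) / ψ p b
          - (ρ₁ b * repu p (0 - b) + 1 * (ρ₂ b * repu p (b - 0))) / ψ p b := by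
      funext b
      rw [zero_sub, sub_zero]
      ring
    rw [hf x, e, integral_sub (G_integrable h1 h2 hC le_rfl hs1 x)
      (G_integrable h1 h2 hC le_rfl hs1 0)]
    show G p ρ₁ ρ₂ p 1 x - G p ρ₁ ρ₂ p 1 0 + c = _
    ring
  -- Step B : iterated derivatives up to p - 1
  have hB : ∀ k : ℕ, k ≤ p - 1 → ∃ c' : ℝ, iteratedDeriv k f
      = fun x => (p.descFactorial k : ℝ) * G p ρ₁ ρ₂ (p - k) ((-1 : ℝ) ^ k) x + c' := by
    intro k
    induction k with
    | zero =>
      intro _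
      refine ⟨c - G p ρ₁ ρ₂ p 1 0, ?_⟩
      funext x
      simpa using hsplit x
    | succ k ih =>
      intro hk1
      obtain ⟨c', hk⟩ := ih (by omega)
      refine ⟨0, ?_⟩
      funext x
      rw [iteratedDeriv_succ, hk]
      have hG := hasDerivAt_G h1 h2 hC0 hC (m := p - k) (by omega) (by omega)
        (s := (-1 : ℝ) ^ k) (by rw [abs_pow, abs_neg, abs_one, one_pow]) x
      have hd := ((hG.const_mul ((p.descFactorial k : ℝ))).add_const c').deriv
      rw [hd]
      have hcast : ((p.descFactorial (k+1) : ℝ)) = ((p - k : ℕ) : ℝ) * (p.descFactorial k : ℝ) := by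
        rw [Nat.descFactorial_succ]
        push_cast
        ring
      rw [show p - k - 1 = p - (k + 1) by omega, show -((-1:ℝ)^k) = (-1:ℝ)^(k+1) by
        rw [pow_succ]; ring, hcast]
      ring
  -- Step C : the (p-1)-st derivative
  obtain ⟨c', hpred⟩ := hB (p - 1) le_rfl
  have hsign : ((-1 : ℝ)) ^ (p - 1) = 1 :=
    Even.neg_one_pow (Nat.Odd.sub_odd hodd odd_one)
  have hone : p - (p - 1) = 1 := by omega
  have hdesc : p.descFactorial (p - 1) = p.factorial := by
    calc p.descFactorial (p - 1) = (p - (p - 1)) * p.descFactorial (p - 1) := by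
          rw [hone, one_mul]
      _ = p.descFactorial (p - 1 + 1) := (Nat.descFactorial_succ p (p - 1)).symm
      _ = p.descFactorial p := by rw [show p - 1 + 1 = p by omega]
      _ = p.factorial := Nat.descFactorial_self p
  rw [hsign, hone, hdesc] at hpred
  -- Step D : the p-th derivative
  have hg1 : Integrable fun b => ρ₁ b / ψ p b := rho_div_psi_integrable h1 fun b => (hC b).1
  have hg2 : Integrable fun b => ρ₂ b / ψ p b := rho_div_psi_integrable h2 fun b => (hC b).2
  have hD : iteratedDeriv p f = fun x => (p.factorial : ℝ)
      * ((∫ b in Iio x, ρ₁ b / ψ p b) - 1 * ∫ b in Ioi x, ρ₂ b / ψ p b) := by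
    have hstep : iteratedDeriv p f = deriv (iteratedDeriv (p - 1) f) := by
      conv_lhs => rw [show p = p - 1 + 1 by omega]
      rw [iteratedDeriv_succ]
    rw [hstep, hpred]
    funext x
    have hG1 := hasDerivAt_G_one h1 h2 hC0 hC hp hs1 x
    exact (((hG1.const_mul ((p.factorial : ℝ))).add_const c').deriv).trans (by ring)
  -- Step E : the (p+1)-st derivative
  have hE : ∀ x : ℝ, iteratedDeriv (p + 1) f x
      = (p.factorial : ℝ) * ((ρ₁ x + ρ₂ x) / ψ p x) := by
    intro x
    rw [iteratedDeriv_succ, hD]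
    have hd1 := hasDerivAt_integral_Iio (fun b => ρ₁ b / ψ p b)
      (h1.div (continuous_psi p) fun b => (psi_pos p b).ne') hg1 x
    have hd2 := hasDerivAt_integral_Ioi (fun b => ρ₂ b / ψ p b)
      (h2.div (continuous_psi p) fun b => (psi_pos p b).ne') hg2 x
    have := ((hd1.sub (hd2.const_mul 1)).const_mul ((p.factorial : ℝ))).deriv
    refine this.trans ?_
    ring
  -- Step F : conclusion
  have hfac : (0:ℝ) < (p.factorial : ℝ) := by
    exact_mod_cast Nat.factorial_pos p
  have hptw : (fun b : ℝ =>
        |iteratedDeriv (p + 1) f b / (p.factorial : ℝ) + (ρ₁ b - ρ₂ b) / ψ p b|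
          + |iteratedDeriv (p + 1) f b / (p.factorial : ℝ) - (ρ₁ b - ρ₂ b) / ψ p b|)
      = fun b => 2 * ((|ρ₁ b| + |ρ₂ b|) / ψ p b) := by
    funext b
    have hψ := psi_pos p b
    rw [hE b, mul_comm ((p.factorial:ℝ)) _, mul_div_assoc, div_self hfac.ne', mul_one]
    have e1 : (ρ₁ b + ρ₂ b) / ψ p b + (ρ₁ b - ρ₂ b) / ψ p b = 2 * ρ₁ b / ψ p b := by ring
    have e2 : (ρ₁ b + ρ₂ b) / ψ p b - (ρ₁ b - ρ₂ b) / ψ p b = 2 * ρ₂ b / ψ p b := by ring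
    rw [e1, e2, abs_div, abs_div, abs_of_pos hψ, abs_mul, abs_mul, abs_two]
    ring
  rw [hptw, integral_const_mul]
  ring
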